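/- Let j ≥ 1 be an integer and suppose [L_{−j−1}, L_j] = L_{−1}, L_j ≠ 0, and [L_{−1}, L_{j+1}] = L_j. Then [L_{−j−1}, L_{j+1}] ≠ 0. (Lemma 6.011; the proof uses that the grading is bounded above, i.e. L_i = 0 for i > r.) -/
import Mathlib


/- Graded Lie algebra setting: `F` a field of characteristic 3, `A` a
finite-dimensional Lie algebra over `F`, with a `ℤ`-grading `L : ℤ → Submodule F A`. -/

namespace GradedLie

variable {F A : Type*} [Field F] [CharP F 3] [LieRing A] [LieAlgebra F A]

/-- The linear span of all brackets `⁅u, v⁆` with `u ∈ U`, `v ∈ V`. -/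
def bSpan (U V : Submodule F A) : Submodule F A :=
  Submodule.span F {z | ∃ u ∈ U, ∃ v ∈ V, z = ⁅u, v⁆}

/-- `M` is an irreducible `L0`-module under the adjoint action:
`M ≠ 0` and the only `L0`-submodules of `M` are `0` and `M`. -/
def IsIrred (L0 M : Submodule F A) : Prop :=
  M ≠ ⊥ ∧ ∀ V ≤ M, bSpan L0 V ≤ V → V = ⊥ ∨ V = M

theorem mem_bSpan {U V : Submodule F A} {u v : A} (hu : u ∈ U) (hv : v ∈ V) :
    ⁅u, v⁆ ∈ bSpan U V :=
  Submodule.subset_span ⟨u, hu, v, hv, rfl⟩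

theorem bSpan_le {U V W : Submodule F A}
    (h : ∀ u ∈ U, ∀ v ∈ V, ⁅u, v⁆ ∈ W) : bSpan U V ≤ W := by
  apply Submodule.span_le.2
  rintro z ⟨u, hu, v, hv, rfl⟩
  exact h u hu v hv

theorem bSpan_mono {U U' V V' : Submodule F A} (hU : U ≤ U') (hV : V ≤ V') :
    bSpan U V ≤ bSpan U' V' :=
  bSpan_le fun u hu v hv => mem_bSpan (hU hu) (hV hv)

theorem bSpan_bot_left (V : Submodule F A) : bSpan (⊥ : Submodule F A) V = ⊥ := by
  refine le_antisymm (bSpan_le ?_) bot_le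
  intro u hu v _
  rw [Submodule.mem_bot] at hu ⊢
  rw [hu, zero_lie]

theorem bSpan_jacobi {B C P : Submodule F A}
    (hBC : ∀ a ∈ B, ∀ c ∈ C, ⁅a, c⁆ = 0) :
    bSpan B (bSpan P C) ≤ bSpan (bSpan B P) C := by
  refine bSpan_le fun a ha x hx => ?_
  induction hx using Submodule.span_induction with
  | mem z hz =>
      obtain ⟨p, hp, c, hc, rfl⟩ := hz
      rw [leibniz_lie, hBC a ha c hc, lie_zero, add_zero]
      exact mem_bSpan (mem_bSpan ha hp) hc
  | zero => rw [lie_zero]; exact Submodule.zero_mem _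
  | add x y _ _ hx hy => rw [lie_add]; exact add_mem hx hy
  | smul t x _ hx => rw [lie_smul]; exact Submodule.smul_mem _ _ hx

/-- Iterated bracket spans: `iterSpan U V k = [U, [U, …, [U, V]…]]` (`k` copies of `U`). -/
def iterSpan (U V : Submodule F A) : ℕ → Submodule F A
  | 0 => V
  | k + 1 => bSpan U (iterSpan U V k)

/-- Lemma 6.011: if `j ≥ 1`, `[L (-j-1), L j] = L (-1)`, `L j ≠ 0`, and
`[L (-1), L (j+1)] = L j`, then `[L (-j-1), L (j+1)] ≠ 0`. -/
theorem lemma_6_011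
    [FiniteDimensional F A]
    (L : ℤ → Submodule F A)
    (hdecomp : DirectSum.IsInternal L)
    (hgrade : ∀ i j : ℤ, ∀ x ∈ L i, ∀ y ∈ L j, ⁅x, y⁆ ∈ L (i + j))
    (q r : ℤ) (hq : 1 ≤ q) (hr : 1 ≤ r)
    (hbound : ∀ i : ℤ, i < -q ∨ r < i → L i = ⊥)
    (hbot : L (-q) ≠ ⊥)
    (j : ℤ) (hj : 1 ≤ j)
    (h1 : bSpan (L (-j - 1)) (L j) = L (-1))
    (h2 : L j ≠ ⊥)
    (h3 : bSpan (L (-1)) (L (j + 1)) = L j) :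
    bSpan (L (-j - 1)) (L (j + 1)) ≠ ⊥ := by
  intro hcontra
  have hAC : ∀ a ∈ L (-j - 1), ∀ c ∈ L (j + 1), ⁅a, c⁆ = 0 := by
    intro a ha c hc
    have := mem_bSpan ha hc
    rwa [hcontra, Submodule.mem_bot] at this
  set D : ℕ → Submodule F A := iterSpan (L (-j - 1)) (L (-1)) with hD
  have hD0 : D 0 = L (-1) := rfl
  have hDs : ∀ k, D (k + 1) = bSpan (L (-j - 1)) (D k) := fun k => rfl
  -- Each `D k` is contained in `[D (k+1), L (j+1)]`.
  have key : ∀ k, D k ≤ bSpan (D (k + 1)) (L (j + 1)) := by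
    intro k
    induction k with
    | zero =>
        calc D 0 = bSpan (L (-j - 1)) (bSpan (D 0) (L (j + 1))) := by
              rw [hD0, h3, h1]
          _ ≤ bSpan (bSpan (L (-j - 1)) (D 0)) (L (j + 1)) := bSpan_jacobi hAC
          _ = bSpan (D 1) (L (j + 1)) := by rw [hDs 0]
    | succ k ih =>
        calc D (k + 1) = bSpan (L (-j - 1)) (D k) := hDs k
          _ ≤ bSpan (L (-j - 1)) (bSpan (D (k + 1)) (L (j + 1))) :=
              bSpan_mono le_rfl ih
          _ ≤ bSpan (bSpan (L (-j - 1)) (D (k + 1))) (L (j + 1)) := bSpan_jacobi hAC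
          _ = bSpan (D (k + 2)) (L (j + 1)) := by rw [hDs (k + 1)]
  -- Each `D k` lives in degree `-1 - k * (j + 1)`.
  have grade : ∀ k : ℕ, D k ≤ L (-1 - (k : ℤ) * (j + 1)) := by
    intro k
    induction k with
    | zero => rw [hD0]; norm_num
    | succ k ih =>
        have h' : D (k + 1) ≤ L ((-j - 1) + (-1 - (k : ℤ) * (j + 1))) := by
          rw [hDs k]
          exact bSpan_le fun u hu v hv => hgrade _ _ u hu v (ih hv)
        have heq : (-j - 1) + (-1 - (k : ℤ) * (j + 1)) = -1 - ((k : ℕ) + 1 : ℤ) * (j + 1) := by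
          ring
        rw [heq] at h'
        exact_mod_cast h'
  -- At level `n = q.toNat`, the degree is below `-q`, so `D n = ⊥`.
  obtain ⟨n, hn⟩ : ∃ n : ℕ, (n : ℤ) = q := ⟨q.toNat, Int.toNat_of_nonneg (by omega)⟩
  have hDn : D n = ⊥ := by
    have hlt : -1 - (n : ℤ) * (j + 1) < -q := by nlinarith [hn, hq, hj]
    exact le_bot_iff.1 ((grade n).trans (le_of_eq (hbound _ (Or.inl hlt))))
  -- Propagate vanishing down to `D 0 = L (-1)`.
  have down : ∀ m, D m = ⊥ → D 0 = ⊥ := by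
    intro m
    induction m with
    | zero => exact id
    | succ m ih =>
        intro h
        have h0 : D m ≤ ⊥ := by
          have hk := key m
          rwa [h, bSpan_bot_left] at hk
        exact ih (le_bot_iff.1 h0)
  have hL1 : L (-1) = ⊥ := hD0 ▸ down n hDn
  have : L j = ⊥ := by rw [← h3, hL1, bSpan_bot_left]
  exact h2 this

end GradedLie
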